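/- arXiv:1305.6070 — 3 statements merged into one kernel-verified Lean document; each statement's English description precedes it below -/
import Mathlib

section
/- Let E be an Archimedean ordered real vector space with an order unit e > 0, and let H_e be the set of positive linear functionals f : E → ℝ with f(e) = 1. Then the map π : E → C(H_e), π(x)(f) := f(x), is an injective, order-preserving linear map into the space of continuous real functions on H_e (with the weak* topology). -/
variable {E : Type*} [AddCommGroup E] [PartialOrder E] [IsOrderedAddMonoid E] [Module ℝ E]
  [PosSMulStrictMono ℝ E] [PosSMulReflectLT ℝ E]

/-- An order unit of an ordered real vector space. -/
def IsOrderUnit (e : E) : Prop :=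
  0 < e ∧ ∀ x : E, ∃ l : ℝ, 0 < l ∧ x ≤ l • e

/-- The weak* topology (topology of pointwise convergence) on linear functionals. -/
noncomputable instance : TopologicalSpace (E →ₗ[ℝ] ℝ) :=
  TopologicalSpace.induced (fun f => (f : E → ℝ)) inferInstance

/-- `H_e`: the positive linear functionals normalized at the order unit `e`. -/
def He (e : E) : Set (E →ₗ[ℝ] ℝ) :=
  {f | (∀ x : E, 0 ≤ x → 0 ≤ f x) ∧ f e = 1}

open Pointwise

section Aux

variable (e : E)

/-- The "gauge" associated to the order unit `e`. -/
noncomputable def unitGauge (x : E) : ℝ := sInf {l : ℝ | x ≤ l • e}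

variable {e}

lemma unitGauge_set_nonempty (he : IsOrderUnit e) (x : E) :
    {l : ℝ | x ≤ l • e}.Nonempty := by
  obtain ⟨l, _, hl⟩ := he.2 x
  exact ⟨l, hl⟩

lemma nonneg_of_smul_e (he : IsOrderUnit e) {c : ℝ} (h : (0 : E) ≤ c • e) : 0 ≤ c := by
  by_contra hc
  push_neg at hc
  have hcpos : (0:ℝ) < -c := by linarith
  have h1 : (-c) • e ≤ 0 := by
    rw [neg_smul]
    simpa using neg_nonpos_of_nonneg h
  have h2 := smul_le_smul_of_nonneg_left h1 (inv_nonneg.mpr hcpos.le)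
  rw [inv_smul_smul₀ hcpos.ne', smul_zero] at h2
  exact he.1.not_ge h2

lemma unitGauge_bddBelow (he : IsOrderUnit e) (x : E) :
    BddBelow {l : ℝ | x ≤ l • e} := by
  obtain ⟨m, _, hm⟩ := he.2 (-x)
  refine ⟨-m, fun l hl => ?_⟩
  have : (0 : E) ≤ (l + m) • e := by
    have := add_le_add hl hm
    rw [add_smul]
    simpa using this
  have := nonneg_of_smul_e he this
  linarith

lemma unitGauge_le (he : IsOrderUnit e) {x : E} {l : ℝ} (h : x ≤ l • e) :
    unitGauge e x ≤ l :=
  csInf_le (unitGauge_bddBelow he x) h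

lemma le_smul_of_lt_gauge (he : IsOrderUnit e) {x : E} {l : ℝ}
    (h : unitGauge e x < l) : x ≤ l • e := by
  obtain ⟨m, hm, hml⟩ := exists_lt_of_csInf_lt (unitGauge_set_nonempty he x) h
  exact hm.trans (smul_le_smul_of_nonneg_right hml.le he.1.le)

lemma unitGauge_add (he : IsOrderUnit e) (x y : E) :
    unitGauge e (x + y) ≤ unitGauge e x + unitGauge e y := by
  have key : ∀ l ∈ {l : ℝ | x ≤ l • e}, ∀ m ∈ {l : ℝ | y ≤ l • e},
      unitGauge e (x + y) ≤ l + m := by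
    intro l hl m hm
    exact unitGauge_le he (by rw [add_smul]; exact add_le_add hl hm)
  have h1 : ∀ m ∈ {l : ℝ | y ≤ l • e}, unitGauge e (x + y) - m ≤ unitGauge e x := by
    intro m hm
    apply le_csInf (unitGauge_set_nonempty he x)
    intro l hl
    linarith [key l hl m hm]
  have h2 : unitGauge e (x + y) - unitGauge e x ≤ unitGauge e y := by
    apply le_csInf (unitGauge_set_nonempty he y)
    intro m hm
    linarith [h1 m hm]
  linarith

lemma unitGauge_smul (he : IsOrderUnit e) (c : ℝ) (hc : 0 < c) (x : E) :
    unitGauge e (c • x) = c * unitGauge e x := by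
  have hset : {l : ℝ | c • x ≤ l • e} = c • {l : ℝ | x ≤ l • e} := by
    ext l
    constructor
    · intro hl
      refine ⟨c⁻¹ * l, ?_, by simp [smul_eq_mul]; field_simp⟩
      have := smul_le_smul_of_nonneg_left hl (inv_nonneg.mpr hc.le)
      rwa [inv_smul_smul₀ hc.ne', smul_smul] at this
    · rintro ⟨m, hm, rfl⟩
      have := smul_le_smul_of_nonneg_left hm hc.le
      simpa [smul_eq_mul, mul_smul] using this
  rw [unitGauge, hset]
  rw [Real.sInf_smul_of_nonneg hc.le]
  simp [smul_eq_mul, unitGauge]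

lemma unitGauge_nonpos (he : IsOrderUnit e) {x : E} (h : x ≤ 0) :
    unitGauge e x ≤ 0 :=
  unitGauge_le he (by simpa using h)

lemma unitGauge_zero (he : IsOrderUnit e) : unitGauge e (0 : E) = 0 := by
  refine le_antisymm (unitGauge_nonpos he le_rfl) ?_
  apply le_csInf (unitGauge_set_nonempty he 0)
  intro l hl
  exact nonneg_of_smul_e he hl

lemma neg_unitGauge_neg_le (he : IsOrderUnit e) (x : E) :
    -unitGauge e (-x) ≤ unitGauge e x := by
  have := unitGauge_add he x (-x)
  rw [add_neg_cancel, unitGauge_zero he] at this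
  linarith

/-- If the gauge of `x` is nonpositive then, by Archimedean-ness, `x ≤ 0`. -/
lemma nonpos_of_unitGauge_nonpos
    (harch : ∀ y x : E, 0 ≤ x → (∀ n : ℕ, (n : ℝ) • y ≤ x) → y ≤ 0)
    (he : IsOrderUnit e) {x : E} (h : unitGauge e x ≤ 0) : x ≤ 0 := by
  apply harch x e he.1.le
  intro n
  rcases Nat.eq_zero_or_pos n with hn | hn
  · simpa [hn] using he.1.le
  · have hx : x ≤ ((n : ℝ)⁻¹) • e := by
      apply le_smul_of_lt_gauge he
      exact lt_of_le_of_lt h (by positivity)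
    have := smul_le_smul_of_nonneg_left hx (by positivity : (0:ℝ) ≤ (n:ℝ))
    rwa [smul_smul, mul_inv_cancel₀ (by positivity : (n:ℝ) ≠ 0), one_smul] at this

/-- A positive normalized functional dominated by the gauge, taking a prescribed
positive value. -/
lemma exists_he_functional (he : IsOrderUnit e) {x : E} (hx : x ≠ 0)
    (hpos : 0 < unitGauge e x) :
    ∃ g : E →ₗ[ℝ] ℝ, g ∈ He e ∧ g x = unitGauge e x := by
  set N := unitGauge e with hN
  set f := LinearPMap.mkSpanSingleton (K := ℝ) (L := ℝ) (σ := RingHom.id ℝ) x (N x) hx with hf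
  have hdom : ∀ z : f.domain, f z ≤ N z := by
    rintro ⟨z, hz⟩
    rw [hf, LinearPMap.domain_mkSpanSingleton] at hz
    obtain ⟨c, rfl⟩ := Submodule.mem_span_singleton.mp hz
    have happ : f ⟨c • x, hz⟩ = c • N x := LinearPMap.mkSpanSingleton'_apply x (N x) _ c _
    rw [happ]
    show c • N x ≤ N (c • x)
    rcases lt_trichotomy c 0 with hc | hc | hc
    · have h1 : N ((-c) • x) = (-c) * N x := unitGauge_smul he (-c) (by linarith) x
      have h2 : -N (-(c • x)) ≤ N (c • x) := neg_unitGauge_neg_le he _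
      rw [show -(c • x) = (-c) • x by simp [neg_smul], h1] at h2
      simp only [smul_eq_mul]
      nlinarith
    · simp [hc, unitGauge_zero he, hN]
    · simp only [hN]
      rw [unitGauge_smul he c hc x]; simp [smul_eq_mul]
  obtain ⟨g, hg1, hg2⟩ := exists_extension_of_le_sublinear f N
    (fun c hc z => unitGauge_smul he c hc z) (unitGauge_add he) hdom
  have hgx : g x = N x := by
    have hmem : x ∈ f.domain := by
      rw [hf, LinearPMap.domain_mkSpanSingleton]
      exact Submodule.mem_span_singleton_self x
    have h1 := hg1 ⟨x, hmem⟩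
    have h2 : f ⟨x, hmem⟩ = N x :=
      LinearPMap.mkSpanSingleton'_apply_self x (N x) _ _
    rw [h1, h2]
  have hgpos : ∀ z : E, 0 ≤ z → 0 ≤ g z := by
    intro z hz
    have : g (-z) ≤ N (-z) := hg2 (-z)
    have h2 : N (-z) ≤ 0 := unitGauge_nonpos he (by simpa using hz)
    have : g (-z) ≤ 0 := this.trans h2
    rw [map_neg] at this
    linarith
  have hge : g e = 1 := by
    have h1 : g e ≤ 1 := by
      have := hg2 e
      have he1 : N e ≤ 1 := unitGauge_le he (by simp)
      linarith
    have h2 : g (-e) ≤ -1 := by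
      have := hg2 (-e)
      have : N (-e) ≤ -1 := by
        apply unitGauge_le he
        rw [neg_smul, one_smul]
      linarith [hg2 (-e)]
    rw [map_neg] at h2
    linarith
  exact ⟨g, ⟨hgpos, hge⟩, hgx⟩

lemma exists_he_functional_ne_zero
    (harch : ∀ y x : E, 0 ≤ x → (∀ n : ℕ, (n : ℝ) • y ≤ x) → y ≤ 0)
    (he : IsOrderUnit e) {x : E} (hx : x ≠ 0) :
    ∃ g : E →ₗ[ℝ] ℝ, g ∈ He e ∧ g x ≠ 0 := by
  have hcase : 0 < unitGauge e x ∨ 0 < unitGauge e (-x) := by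
    by_contra h
    push_neg at h
    have h1 : x ≤ 0 := nonpos_of_unitGauge_nonpos harch he h.1
    have h2 : -x ≤ 0 := nonpos_of_unitGauge_nonpos harch he h.2
    exact hx (le_antisymm h1 (by simpa using h2))
  rcases hcase with h | h
  · obtain ⟨g, hg, hgx⟩ := exists_he_functional he hx h
    exact ⟨g, hg, by rw [hgx]; exact h.ne'⟩
  · obtain ⟨g, hg, hgx⟩ := exists_he_functional he (by simpa using (neg_ne_zero.mpr hx)) h
    refine ⟨g, hg, ?_⟩
    rw [map_neg] at hgx
    intro h0
    rw [h0] at hgx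
    exact h.ne (by linarith)

end Aux

/-- for an Archimedean ordered real vector space `E` with order unit `e`,
the map `π : E → C(H_e)`, `π(x)(f) = f(x)`, is an injective, order-preserving linear
map into the continuous real functions on `H_e` (with the weak* topology). -/
theorem exists_injective_monotone_linear_rep
    (harch : ∀ y x : E, 0 ≤ x → (∀ n : ℕ, (n : ℝ) • y ≤ x) → y ≤ 0)
    (e : E) (he : IsOrderUnit e) :
    ∃ π : E →ₗ[ℝ] C(He e, ℝ),
      (∀ (x : E) (f : He e), π x f = (f : E →ₗ[ℝ] ℝ) x) ∧
        Function.Injective π ∧ Monotone π := by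
  have hcont : ∀ x : E, Continuous (fun f : He e => (f : E →ₗ[ℝ] ℝ) x) := by
    intro x
    have h1 : Continuous (fun g : E →ₗ[ℝ] ℝ => g x) :=
      (continuous_apply x).comp continuous_induced_dom
    exact h1.comp continuous_subtype_val
  refine ⟨{ toFun := fun x => ⟨fun f => (f : E →ₗ[ℝ] ℝ) x, hcont x⟩
            map_add' := fun x y => ContinuousMap.ext fun f => by simp
            map_smul' := fun c x => ContinuousMap.ext fun f => by simp }, fun x f => rfl, ?_, ?_⟩
  · rw [injective_iff_map_eq_zero]
    intro x hx
    by_contra hx0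
    obtain ⟨g, hg, hgx⟩ := exists_he_functional_ne_zero harch he hx0
    have : (⟨g, hg⟩ : He e).val x = 0 := by
      have := congrArg (fun F => F ⟨g, hg⟩) hx
      simpa using this
    exact hgx this
  · intro x y hxy
    rw [ContinuousMap.le_def]
    intro f
    simp only [LinearMap.coe_mk, AddHom.coe_mk, ContinuousMap.coe_mk]
    have := f.2.1 (y - x) (by simpa using hxy)
    rw [map_sub] at this
    linarith
end

section
/- Let (X, E, d) be an Archimedean order-unit-metric space. Then the order-unit-topology on X (generated by the balls B(x, u) = {y : d(x,y) ⋘ u} for order units u) is metrizable; indeed it coincides with the topology of the metric d̄(x,y) = p(d(x,y)), where p is the order-unit norm associated with a fixed order unit e. -/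
variable {E : Type*} [AddCommGroup E] [PartialOrder E] [IsOrderedAddMonoid E] [Module ℝ E]
  [PosSMulStrictMono ℝ E] [PosSMulReflectLT ℝ E]

/-- The order-unit norm associated with `e`: `p(x) = sup {|f(x)| : f ∈ H_e}`. -/
noncomputable def pnorm (e : E) (x : E) : ℝ :=
  ⨆ f : He e, |(f : E →ₗ[ℝ] ℝ) x|

namespace OUaux

lemma ou_mono {a b : E} (ha : IsOrderUnit a) (hab : a ≤ b) : IsOrderUnit b := by
  refine ⟨lt_of_lt_of_le ha.1 hab, fun x => ?_⟩
  obtain ⟨l, hl, hx⟩ := ha.2 x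
  exact ⟨l, hl, hx.trans (smul_le_smul_of_nonneg_left hab hl.le)⟩

lemma ou_smul {e : E} (he : IsOrderUnit e) {c : ℝ} (hc : 0 < c) : IsOrderUnit (c • e) := by
  refine ⟨smul_pos hc he.1, fun x => ?_⟩
  obtain ⟨l, hl, hx⟩ := he.2 x
  refine ⟨l / c, div_pos hl hc, ?_⟩
  rwa [smul_smul, div_mul_cancel₀ _ hc.ne']

lemma ou_exists_smul_le {e u : E} (he : IsOrderUnit e) (hu : IsOrderUnit u) :
    ∃ ε : ℝ, 0 < ε ∧ ε • e ≤ u := by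
  obtain ⟨l, hl, hle⟩ := hu.2 e
  refine ⟨1 / l, by positivity, ?_⟩
  have h := smul_le_smul_of_nonneg_left hle (le_of_lt (show (0:ℝ) < 1 / l by positivity))
  rwa [smul_smul, one_div_mul_cancel hl.ne', one_smul] at h

/-- The set of scalars `t` with `x ≤ t • e`. -/
def Sset (e x : E) : Set ℝ := {t : ℝ | x ≤ t • e}

/-- The sublinear functional `q(x) = inf {t : x ≤ t • e}`. -/
noncomputable def qfun (e x : E) : ℝ := sInf (Sset e x)

lemma Sset_nonempty {e : E} (he : IsOrderUnit e) (x : E) : (Sset e x).Nonempty := by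
  obtain ⟨l, _, hx⟩ := he.2 x
  exact ⟨l, hx⟩

lemma smul_e_mono {e : E} (he : IsOrderUnit e) {t t' : ℝ} (h : t ≤ t') : t • e ≤ t' • e := by
  have h1 : (0:E) ≤ (t' - t) • e := smul_nonneg (sub_nonneg.2 h) he.1.le
  have h2 : (t' - t) • e = t' • e - t • e := sub_smul t' t e
  rw [h2] at h1
  exact sub_nonneg.1 h1

lemma Sset_upward {e : E} (he : IsOrderUnit e) {x : E} {t t' : ℝ} (h : t ≤ t')
    (ht : t ∈ Sset e x) : t' ∈ Sset e x :=
  le_trans ht (smul_e_mono he h)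

section arch
variable (harch : ∀ y x : E, 0 ≤ x → (∀ n : ℕ, (n : ℝ) • y ≤ x) → y ≤ 0)
variable {e : E} (he : IsOrderUnit e)

include harch he

lemma Sset_bddBelow (x : E) : BddBelow (Sset e x) := by
  by_contra hb
  have hn : ∀ n : ℕ, x ≤ (-(n : ℝ)) • e := by
    intro n
    obtain ⟨t, ht, hlt⟩ := not_bddBelow_iff.1 hb (-(n : ℝ))
    exact Sset_upward he hlt.le ht
  have h0 : (0 : E) ≤ -x := by
    have := hn 0
    simp only [Nat.cast_zero, neg_zero, zero_smul] at this
    exact neg_nonneg.2 this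
  have hne : ∀ n : ℕ, (n : ℝ) • e ≤ -x := by
    intro n
    have h := hn n
    rw [neg_smul] at h
    exact le_neg.1 h
  have : e ≤ 0 := harch e (-x) h0 hne
  exact absurd this he.1.not_ge

lemma qfun_le {x : E} {t : ℝ} (ht : t ∈ Sset e x) : qfun e x ≤ t :=
  csInf_le (Sset_bddBelow harch he x) ht

lemma le_qfun {x : E} {t : ℝ} (ht : ∀ s ∈ Sset e x, t ≤ s) : t ≤ qfun e x :=
  le_csInf (Sset_nonempty he x) ht

lemma qfun_add (x y : E) : qfun e (x + y) ≤ qfun e x + qfun e y := by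
  have key : ∀ t ∈ Sset e x, ∀ u ∈ Sset e y, qfun e (x + y) ≤ t + u := by
    intro t ht u hu
    refine qfun_le harch he ?_
    show x + y ≤ (t + u) • e
    rw [add_smul]
    exact add_le_add ht hu
  have h2 : ∀ u ∈ Sset e y, qfun e (x + y) - u ≤ qfun e x := by
    intro u hu
    refine le_qfun harch he fun t ht => ?_
    have := key t ht u hu
    linarith
  have h3 : qfun e (x + y) - qfun e x ≤ qfun e y := by
    refine le_qfun harch he fun u hu => ?_
    have := h2 u hu
    linarith
  linarith

lemma qfun_smul {c : ℝ} (hc : 0 < c) (x : E) : qfun e (c • x) = c * qfun e x := by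
  apply le_antisymm
  · have h1 : qfun e (c • x) / c ≤ qfun e x := by
      refine le_qfun harch he fun t ht => ?_
      rw [div_le_iff₀ hc]
      refine qfun_le harch he ?_
      show c • x ≤ (t * c) • e
      calc c • x ≤ c • (t • e) := smul_le_smul_of_nonneg_left ht hc.le
      _ = (t * c) • e := by rw [smul_smul, mul_comm]
    calc qfun e (c • x) = (qfun e (c • x) / c) * c := by field_simp
    _ ≤ qfun e x * c := mul_le_mul_of_nonneg_right h1 hc.le
    _ = c * qfun e x := mul_comm _ _
  · refine le_qfun harch he fun t ht => ?_
    have hx : x ≤ (t / c) • e := by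
      have h1 := smul_le_smul_of_nonneg_left ht (le_of_lt (show (0:ℝ) < 1 / c by positivity))
      rw [smul_smul, smul_smul, one_div_mul_cancel hc.ne', one_smul] at h1
      rw [show t / c = 1 / c * t by ring]
      exact h1
    have := qfun_le harch he hx
    calc c * qfun e x ≤ c * (t / c) := mul_le_mul_of_nonneg_left this hc.le
    _ = t := by field_simp

lemma qfun_zero : qfun e (0 : E) = 0 := by
  apply le_antisymm
  · exact qfun_le harch he (by show (0:E) ≤ (0:ℝ) • e; simp)
  · refine le_qfun harch he fun t ht => ?_
    by_contra h
    push_neg at h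
    have h1 : (0 : E) < (-t) • e := smul_pos (by linarith) he.1
    have h2 : (0 : E) ≤ t • e := ht
    rw [neg_smul] at h1
    exact absurd h2 (neg_pos.1 h1).not_ge

lemma qfun_nonneg_add (z : E) : 0 ≤ qfun e z + qfun e (-z) := by
  have := qfun_add harch he z (-z)
  rw [add_neg_cancel, qfun_zero harch he] at this
  linarith

lemma exists_He_eq_qfun (z : E) : ∃ f : E →ₗ[ℝ] ℝ, f ∈ He e ∧ f z = qfun e z := by
  classical
  have H : ∀ c : ℝ, c • z = 0 → c • (qfun e z) = 0 := by
    intro c hc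
    rcases smul_eq_zero.1 hc with h | h
    · rw [h, zero_smul]
    · rw [h, qfun_zero harch he, smul_zero]
  set F : E →ₗ.[ℝ] ℝ := LinearPMap.mkSpanSingleton' z (qfun e z) H with hF
  have hdom : F.domain = (Submodule.span ℝ {z}) := rfl
  have hf : ∀ w : F.domain, F w ≤ qfun e w := by
    rintro ⟨w, hw⟩
    rw [hdom] at hw
    obtain ⟨c, hc⟩ := Submodule.mem_span_singleton.1 hw
    have hmem : c • z ∈ F.domain := by rw [hdom]; rw [← hc] at hw; exact hw
    have heq : (⟨w, ‹w ∈ F.domain›⟩ : F.domain) = ⟨c • z, hmem⟩ := Subtype.ext hc.symm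
    rw [heq, LinearPMap.mkSpanSingleton'_apply]
    show c • qfun e z ≤ qfun e (c • z)
    rcases lt_trichotomy c 0 with h | h | h
    · have h1 : c • z = (-c) • (-z) := by rw [neg_smul_neg]
      rw [h1, qfun_smul harch he (by linarith : (0:ℝ) < -c)]
      have h2 := qfun_nonneg_add harch he z
      have : c • qfun e z = c * qfun e z := rfl
      rw [this]
      nlinarith
    · rw [h, zero_smul, zero_smul, qfun_zero harch he]
    · rw [qfun_smul harch he h]
      exact le_of_eq rfl
  obtain ⟨g, hg1, hg2⟩ := exists_extension_of_le_sublinear F (qfun e)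
    (fun c hc x => qfun_smul harch he hc x) (fun x y => qfun_add harch he x y) hf
  have hzmem : z ∈ F.domain := by rw [hdom]; exact Submodule.mem_span_singleton_self z
  have hgz : g z = qfun e z := by
    have h1 := hg1 ⟨z, hzmem⟩
    have h2 : F ⟨z, hzmem⟩ = qfun e z := LinearPMap.mkSpanSingleton'_apply_self z (qfun e z) H _
    rw [← h2]
    exact h1
  refine ⟨g, ⟨?_, ?_⟩, hgz⟩
  · intro x hx
    have h1 := hg2 (-x)
    have h2 : qfun e (-x) ≤ 0 :=
      qfun_le harch he (by show -x ≤ (0:ℝ) • e; rw [zero_smul]; exact neg_nonpos.2 hx)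
    rw [map_neg] at h1
    linarith
  · have h1 : g e ≤ 1 := (hg2 e).trans (qfun_le harch he
      (by show e ≤ (1:ℝ) • e; rw [one_smul]))
    have h2 : g (-e) ≤ -1 := (hg2 (-e)).trans (qfun_le harch he
      (by show -e ≤ (-1:ℝ) • e; rw [neg_smul, one_smul]))
    rw [map_neg] at h2
    linarith

lemma He_apply_le_qfun {f : E →ₗ[ℝ] ℝ} (hf : f ∈ He e) (z : E) : f z ≤ qfun e z := by
  refine le_qfun harch he fun t ht => ?_
  have h1 : (0:ℝ) ≤ f (t • e - z) := hf.1 _ (sub_nonneg.2 ht)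
  rw [map_sub, map_smul, hf.2] at h1
  simp only [smul_eq_mul, mul_one] at h1
  linarith

lemma bddAbove_He (z : E) : BddAbove (Set.range fun f : He e => |(f : E →ₗ[ℝ] ℝ) z|) := by
  refine ⟨max (qfun e z) (qfun e (-z)), ?_⟩
  rintro r ⟨⟨f, hf⟩, rfl⟩
  rcases abs_cases (f z) with ⟨h1, _⟩ | ⟨h1, _⟩
  · simp only [h1]
    exact le_max_of_le_left (He_apply_le_qfun harch he hf z)
  · simp only [h1]
    have := He_apply_le_qfun harch he hf (-z)
    rw [map_neg] at this
    exact le_max_of_le_right this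

lemma qfun_le_pnorm (z : E) : qfun e z ≤ pnorm e z := by
  obtain ⟨f, hf, hfz⟩ := exists_He_eq_qfun harch he z
  have h1 : |(f : E →ₗ[ℝ] ℝ) z| ≤ pnorm e z :=
    le_ciSup (bddAbove_He harch he z) (⟨f, hf⟩ : He e)
  calc qfun e z = f z := hfz.symm
  _ ≤ |f z| := le_abs_self _
  _ ≤ pnorm e z := h1

/-- If `pnorm e z < ε` then `ε • e - z` is an order unit. -/
lemma ou_of_pnorm_lt {z : E} {ε : ℝ} (hz : pnorm e z < ε) : IsOrderUnit (ε • e - z) := by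
  have hq : qfun e z < ε := lt_of_le_of_lt (qfun_le_pnorm harch he z) hz
  obtain ⟨t, ht, hlt⟩ := exists_lt_of_csInf_lt (Sset_nonempty he z) hq
  have h1 : (ε - t) • e ≤ ε • e - z := by
    rw [sub_smul]
    exact sub_le_sub_left ht _
  exact ou_mono (ou_smul he (by linarith)) h1

/-- If `z ≥ 0` and `c • e - z` is an order unit then `pnorm e z ≤ c`. -/
lemma pnorm_le_of_ou {z : E} {c : ℝ} (hz : 0 ≤ z) (hu : IsOrderUnit (c • e - z)) :
    pnorm e z ≤ c := by
  have hc : 0 ≤ c := by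
    by_contra h
    push_neg at h
    have h1 : c • e ≤ 0 := by
      have h' : (0:E) ≤ (-c) • e := smul_nonneg (by linarith) he.1.le
      rw [neg_smul] at h'
      exact neg_nonneg.1 h'
    have h2 : (0:E) < c • e - z := hu.1
    have h3 : c • e - z ≤ c • e := sub_le_self _ hz
    exact absurd (h2.trans_le h3) h1.not_gt
  refine Real.iSup_le (fun f => ?_) hc
  obtain ⟨f, hf⟩ := f
  have h0 : 0 ≤ f z := hf.1 z hz
  have h1 : (0:ℝ) ≤ f (c • e - z) := hf.1 _ hu.1.le
  rw [map_sub, map_smul, hf.2] at h1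
  simp only [smul_eq_mul, mul_one] at h1
  rw [abs_of_nonneg h0]
  linarith

end arch

end OUaux

open OUaux TopologicalSpace in
/-- the order-unit topology of an Archimedean order-unit-metric space
(generated by the balls `{y | d x y ⋘ u}` for order units `u`) coincides with the
topology of the metric `d̄(x,y) = p(d(x,y))`; in particular it is metrizable. -/
theorem orderUnitTopology_metrizable {X : Type*}
    (harch : ∀ y x : E, 0 ≤ x → (∀ n : ℕ, (n : ℝ) • y ≤ x) → y ≤ 0)
    (e : E) (he : IsOrderUnit e)
    (d : X → X → E)
    (hd0 : ∀ x y : X, d x y = 0 ↔ x = y)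
    (hsymm : ∀ x y : X, d x y = d y x)
    (htri : ∀ x y z : X, d x y ≤ d x z + d y z) :
    ∀ s : Set X,
      @IsOpen X (TopologicalSpace.generateFrom
          {t : Set X | ∃ (x : X) (u : E), IsOrderUnit u ∧
            t = {y : X | IsOrderUnit (u - d x y)}}) s ↔
        ∀ x ∈ s, ∃ r : ℝ, 0 < r ∧ {y : X | pnorm e (d x y) < r} ⊆ s := by
  classical
  -- nonnegativity of d
  have hdnn : ∀ x y : X, 0 ≤ d x y := by
    intro x y
    have h1 : d x x ≤ d x y + d x y := htri x x y
    rw [(hd0 x x).2 rfl] at h1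
    have h2 : (0:E) ≤ (2:ℝ) • d x y := by rw [two_smul]; exact h1
    have h3 := smul_le_smul_of_nonneg_left h2 (by norm_num : (0:ℝ) ≤ 1/2)
    rwa [smul_zero, smul_smul, show (1/2 : ℝ) * 2 = 1 by norm_num, one_smul] at h3
  intro s
  constructor
  · intro hopen
    induction hopen with
    | basic t ht =>
      obtain ⟨z, u, hu, rfl⟩ := ht
      intro x hx
      obtain ⟨ε, hε, hle⟩ := ou_exists_smul_le he hx
      refine ⟨ε, hε, fun y hy => ?_⟩
      have hball : IsOrderUnit (ε • e - d x y) := ou_of_pnorm_lt harch he hy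
      have htriangle : d z y ≤ d z x + d x y := by
        have := htri z y x
        rwa [hsymm y x] at this
      have hmono : ε • e - d x y ≤ u - d z y := by
        have h1 : ε • e ≤ u - d z x := hle
        have h2 : u - d z y ≥ u - (d z x + d x y) := by
          exact sub_le_sub_left htriangle u
        calc ε • e - d x y ≤ (u - d z x) - d x y := sub_le_sub_right h1 _
        _ = u - (d z x + d x y) := by abel
        _ ≤ u - d z y := h2
      exact ou_mono hball hmono
    | univ =>
      intro x _
      exact ⟨1, one_pos, fun y _ => trivial⟩
    | inter s t _ _ ihs iht =>
      intro x hx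
      obtain ⟨r1, hr1, hs1⟩ := ihs x hx.1
      obtain ⟨r2, hr2, hs2⟩ := iht x hx.2
      refine ⟨min r1 r2, lt_min hr1 hr2, fun y hy => ?_⟩
      have hy' : pnorm e (d x y) < min r1 r2 := hy
      exact ⟨hs1 (lt_of_lt_of_le hy' (min_le_left _ _)),
        hs2 (lt_of_lt_of_le hy' (min_le_right _ _))⟩
    | sUnion S _ ih =>
      intro x hx
      obtain ⟨t, htS, hxt⟩ := hx
      obtain ⟨r, hr, hsub⟩ := ih t htS x hxt
      exact ⟨r, hr, fun y hy => ⟨t, htS, hsub hy⟩⟩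
  · intro h
    -- s is the union of basic balls
    have key : s = ⋃₀ {t : Set X | ∃ x : X, ∃ hx : x ∈ s,
        t = {y : X | IsOrderUnit (((h x hx).choose / 2) • e - d x y)}} := by
      ext y
      constructor
      · intro hy
        refine ⟨{y' : X | IsOrderUnit (((h y hy).choose / 2) • e - d y y')}, ⟨y, hy, rfl⟩, ?_⟩
        show IsOrderUnit (((h y hy).choose / 2) • e - d y y)
        rw [(hd0 y y).2 rfl, sub_zero]
        exact ou_smul he (by have := (h y hy).choose_spec.1; positivity)
      · rintro ⟨t, ⟨x, hx, rfl⟩, hyt⟩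
        have hyt : IsOrderUnit (((h x hx).choose / 2) • e - d x y) := hyt
        have hr : 0 < (h x hx).choose := (h x hx).choose_spec.1
        have hp : pnorm e (d x y) ≤ (h x hx).choose / 2 :=
          pnorm_le_of_ou harch he (hdnn x y) hyt
        have : pnorm e (d x y) < (h x hx).choose := by linarith
        exact (h x hx).choose_spec.2 this
    rw [key]
    apply TopologicalSpace.GenerateOpen.sUnion
    rintro t ⟨x, hx, rfl⟩
    apply TopologicalSpace.GenerateOpen.basic
    refine ⟨x, ((h x hx).choose / 2) • e, ?_, rfl⟩
    exact ou_smul he (by have := (h x hx).choose_spec.1; positivity)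
end

section
/- Let (X, E, d) be an Archimedean order-unit-metric space with order unit e, and let d̄(x, y) = p(d(x, y)) be the associated real-valued metric. A sequence (x_n) in X is ⋘-Cauchy (for every order unit u and ε > 0, eventually d(x_n, x_m) ⋘ ε·u) if and only if it is Cauchy in the metric space (X, d̄). -/
set_option linter.unusedSectionVars false
set_option maxHeartbeats 1000000

variable {E : Type*} [AddCommGroup E] [PartialOrder E] [IsOrderedAddMonoid E] [Module ℝ E] [PosSMulStrictMono ℝ E]

noncomputable def Nfun (e : E) (x : E) : ℝ := sInf {l : ℝ | x ≤ l • e}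

section Aux
variable {e : E} (he : IsOrderUnit e)
include he

lemma nonneg_of_smul_e_s17 {c : ℝ} (hc : 0 ≤ c • e) : 0 ≤ c := by
  by_contra h
  push_neg at h
  have h2 : 0 < (-c) • e := smul_pos (neg_pos.2 h) he.1
  rw [neg_smul, neg_pos] at h2
  exact h2.not_ge hc

lemma Nset_nonempty (x : E) : {l : ℝ | x ≤ l • e}.Nonempty := by
  obtain ⟨l, _, hl⟩ := he.2 x; exact ⟨l, hl⟩

lemma Nset_bddBelow (x : E) : BddBelow {l : ℝ | x ≤ l • e} := by
  obtain ⟨l', _, hl'⟩ := he.2 (-x)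
  refine ⟨-l', fun l hl => ?_⟩
  have h1 : 0 ≤ (l + l') • e := by
    have := add_le_add hl hl'
    rw [add_neg_cancel] at this
    rwa [add_smul]
  have := nonneg_of_smul_e_s17 he h1
  linarith

lemma le_Nfun_smul (harch : ∀ y x : E, 0 ≤ x → (∀ n : ℕ, (n : ℝ) • y ≤ x) → y ≤ 0)
    (x : E) : x ≤ Nfun e x • e := by
  have key : ∀ n : ℕ, (n : ℝ) • (x - Nfun e x • e) ≤ e := by
    intro n
    rcases Nat.eq_zero_or_pos n with h | h
    · simp [h, he.1.le]
    have hn : (0 : ℝ) < n := by exact_mod_cast h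
    have hlt : sInf {l : ℝ | x ≤ l • e} < Nfun e x + (n : ℝ)⁻¹ := by
      rw [Nfun]; have := inv_pos.2 hn; linarith [le_refl (Nfun e x)]
    obtain ⟨l, hl, hln⟩ := (csInf_lt_iff (Nset_bddBelow he x) (Nset_nonempty he x)).1 hlt
    have h1 : x - Nfun e x • e ≤ ((n : ℝ)⁻¹) • e := by
      have h2 : 0 ≤ (Nfun e x + (n : ℝ)⁻¹ - l) • e := smul_nonneg (by linarith) he.1.le
      have h3 : x ≤ (Nfun e x + (n : ℝ)⁻¹) • e := by
        have := add_le_add hl h2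
        rw [← add_smul] at this
        simpa using this
      rw [sub_le_iff_le_add, ← add_smul, add_comm ((n:ℝ)⁻¹)]
      exact h3
    have h4 := smul_le_smul_of_nonneg_left h1 hn.le
    rwa [smul_smul, mul_inv_cancel₀ hn.ne', one_smul] at h4
  have := harch _ e he.1.le key
  exact sub_nonpos.1 this

lemma Nfun_le_iff (harch : ∀ y x : E, 0 ≤ x → (∀ n : ℕ, (n : ℝ) • y ≤ x) → y ≤ 0)
    {x : E} {l : ℝ} : Nfun e x ≤ l ↔ x ≤ l • e := by
  constructor
  · intro h
    have h2 : 0 ≤ (l - Nfun e x) • e := smul_nonneg (by linarith) he.1.le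
    have := add_le_add (le_Nfun_smul he harch x) h2
    rw [← add_smul] at this
    simpa using this
  · intro h
    exact csInf_le (Nset_bddBelow he x) h
variable (harch : ∀ y x : E, 0 ≤ x → (∀ n : ℕ, (n : ℝ) • y ≤ x) → y ≤ 0)
include harch

lemma Nfun_add (x y : E) : Nfun e (x + y) ≤ Nfun e x + Nfun e y := by
  rw [Nfun_le_iff he harch, add_smul]
  exact add_le_add (le_Nfun_smul he harch x) (le_Nfun_smul he harch y)

lemma Nfun_smul {c : ℝ} (hc : 0 < c) (x : E) : Nfun e (c • x) = c * Nfun e x := by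
  apply le_antisymm
  · rw [Nfun_le_iff he harch, mul_smul]
    exact smul_le_smul_of_nonneg_left (le_Nfun_smul he harch x) hc.le
  · apply le_csInf (Nset_nonempty he _)
    intro l hl
    have h1 : x ≤ (l / c) • e := by
      have := smul_le_smul_of_nonneg_left hl (inv_pos.2 hc).le
      rwa [smul_smul, smul_smul, inv_mul_cancel₀ hc.ne', one_smul, ← div_eq_inv_mul] at this
    have := (Nfun_le_iff he harch).2 h1
    calc c * Nfun e x ≤ c * (l / c) := by nlinarith
      _ = l := by field_simp

lemma Nfun_zero : Nfun e (0 : E) = 0 := by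
  apply le_antisymm
  · rw [Nfun_le_iff he harch, zero_smul]
  · exact nonneg_of_smul_e_s17 he (le_Nfun_smul he harch 0)

lemma Nfun_nonneg_total (x : E) : 0 ≤ Nfun e x + Nfun e (-x) := by
  have := Nfun_add he harch x (-x)
  rw [add_neg_cancel, Nfun_zero he harch] at this
  linarith

lemma Nfun_neg_of_nonneg {x : E} (hx : 0 ≤ x) : Nfun e (-x) ≤ 0 := by
  rw [Nfun_le_iff he harch, zero_smul]
  exact neg_nonpos.2 hx

lemma Nfun_e_le : Nfun e e ≤ 1 := by
  rw [Nfun_le_iff he harch, one_smul]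

lemma Nfun_neg_e_le : Nfun e (-e) ≤ -1 := by
  rw [Nfun_le_iff he harch, neg_one_smul]

lemma mem_He_le {f : E →ₗ[ℝ] ℝ} (hf : f ∈ He e) (x : E) : f x ≤ Nfun e x := by
  have h1 : 0 ≤ f (Nfun e x • e - x) := hf.1 _ (sub_nonneg.2 (le_Nfun_smul he harch x))
  rw [map_sub, map_smul, hf.2, smul_eq_mul, mul_one] at h1
  linarith

/-- Hahn-Banach: extend to a functional in `He e` dominating `Nfun` at `x`. -/
lemma exists_He_ge (x : E) : ∃ f ∈ He e, Nfun e x ≤ f x := by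
  have hNhom : ∀ c : ℝ, 0 < c → ∀ y, Nfun e (c • y) = c * Nfun e y := fun c hc y =>
    Nfun_smul he harch hc y
  have hNadd := Nfun_add he harch
  -- helper to upgrade a dominated extension into He
  have upgrade : ∀ g : E →ₗ[ℝ] ℝ, (∀ y, g y ≤ Nfun e y) → g ∈ He e := by
    intro g hg
    constructor
    · intro y hy
      have := (hg (-y)).trans (Nfun_neg_of_nonneg he harch hy)
      rw [map_neg] at this
      linarith
    · have h1 := (hg e).trans (Nfun_e_le he harch)
      have h2 := (hg (-e)).trans (Nfun_neg_e_le he harch)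
      rw [map_neg] at h2
      linarith
  by_cases hx : x = 0
  · -- use span of e
    have hdomin : ∀ z : (LinearPMap.mkSpanSingleton e (1 : ℝ) he.1.ne' : E →ₗ.[ℝ] ℝ).domain,
        (LinearPMap.mkSpanSingleton e (1 : ℝ) he.1.ne') z ≤ Nfun e z := by
      rintro ⟨z, hz⟩
      obtain ⟨c, hc⟩ := Submodule.mem_span_singleton.1 hz
      have hzz : (⟨z, hz⟩ : Submodule.span ℝ ({e} : Set E)) = ⟨c • e, hc ▸ hz⟩ :=
        Subtype.ext hc.symm
      erw [hzz, LinearPMap.mkSpanSingleton'_apply]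
      have : c ≤ Nfun e (c • e) := by
        apply le_csInf (Nset_nonempty he _)
        intro l hl
        have h0 : 0 ≤ (l - c) • e := by
          rw [sub_smul]; exact sub_nonneg.2 hl
        linarith [nonneg_of_smul_e_s17 he h0]
      simpa using this
    obtain ⟨g, hg1, hg2⟩ := exists_extension_of_le_sublinear
      (LinearPMap.mkSpanSingleton e (1 : ℝ) he.1.ne') (Nfun e) hNhom hNadd hdomin
    refine ⟨g, upgrade g hg2, ?_⟩
    simp [hx, Nfun_zero he harch]
  · have hdomin : ∀ z : (LinearPMap.mkSpanSingleton x (Nfun e x) hx : E →ₗ.[ℝ] ℝ).domain,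
        (LinearPMap.mkSpanSingleton x (Nfun e x) hx) z ≤ Nfun e z := by
      rintro ⟨z, hz⟩
      obtain ⟨c, hc⟩ := Submodule.mem_span_singleton.1 hz
      have hzz : (⟨z, hz⟩ : Submodule.span ℝ ({x} : Set E)) = ⟨c • x, hc ▸ hz⟩ :=
        Subtype.ext hc.symm
      erw [hzz, LinearPMap.mkSpanSingleton'_apply]
      simp only [smul_eq_mul, RingHom.id_apply]
      rcases lt_trichotomy c 0 with h | h | h
      · rw [show c • x = (-c) • (-x) by rw [neg_smul, smul_neg, neg_neg],
          Nfun_smul he harch (neg_pos.2 h)]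
        nlinarith [Nfun_nonneg_total he harch x]
      · simp [h, Nfun_zero he harch]
      · rw [Nfun_smul he harch h]
    obtain ⟨g, hg1, hg2⟩ := exists_extension_of_le_sublinear
      (LinearPMap.mkSpanSingleton x (Nfun e x) hx) (Nfun e) hNhom hNadd hdomin
    refine ⟨g, upgrade g hg2, ?_⟩
    have := hg1 ⟨x, Submodule.mem_span_singleton_self x⟩
    rw [LinearPMap.mkSpanSingleton_apply] at this
    rw [this]

lemma Nfun_le_pnorm (x : E) : Nfun e x ≤ pnorm e x := by
  obtain ⟨f, hf, hfx⟩ := exists_He_ge he harch x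
  have hbdd : BddAbove (Set.range fun f : He e => |(f : E →ₗ[ℝ] ℝ) x|) := by
    refine ⟨max (Nfun e x) (Nfun e (-x)), ?_⟩
    rintro r ⟨⟨g, hg⟩, rfl⟩
    have h1 := mem_He_le he harch hg x
    have h2 := mem_He_le he harch hg (-x)
    rw [map_neg] at h2
    rw [abs_le]
    constructor
    · have := le_max_right (Nfun e x) (Nfun e (-x)); linarith
    · exact h1.trans (le_max_left _ _)
  calc Nfun e x ≤ f x := hfx
    _ ≤ |f x| := le_abs_self _
    _ ≤ pnorm e x := le_ciSup hbdd (⟨f, hf⟩ : He e)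

end Aux

/-- a sequence in an Archimedean order-unit-metric space is `⋘`-Cauchy
(for every order unit `u` and `ε > 0`, eventually `d(x_n, x_m) ⋘ ε • u`) iff it is
Cauchy for the metric `d̄(x,y) = p(d(x,y))`. -/
theorem orderUnit_cauchy_iff_dbar_cauchy {X : Type*}
    (harch : ∀ y x : E, 0 ≤ x → (∀ n : ℕ, (n : ℝ) • y ≤ x) → y ≤ 0)
    (e : E) (he : IsOrderUnit e)
    (d : X → X → E)
    (hd0 : ∀ x y : X, d x y = 0 ↔ x = y)
    (hsymm : ∀ x y : X, d x y = d y x)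
    (htri : ∀ x y z : X, d x y ≤ d x z + d y z)
    (xs : ℕ → X) :
    (∀ u : E, IsOrderUnit u → ∀ ε : ℝ, 0 < ε →
        ∃ k : ℕ, ∀ n ≥ k, ∀ m ≥ k, IsOrderUnit (ε • u - d (xs n) (xs m))) ↔
      (∀ ε : ℝ, 0 < ε →
        ∃ k : ℕ, ∀ n ≥ k, ∀ m ≥ k, pnorm e (d (xs n) (xs m)) < ε) := by
  have hdnonneg : ∀ n m : ℕ, 0 ≤ d (xs n) (xs m) := by
    intro n m
    have h1 := htri (xs n) (xs n) (xs m)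
    rw [(hd0 (xs n) (xs n)).2 rfl] at h1
    have h2 : (0 : E) ≤ (2 : ℝ) • d (xs n) (xs m) := by
      rw [two_smul]; exact h1
    have h3 := smul_le_smul_of_nonneg_left h2 (by norm_num : (0:ℝ) ≤ (2:ℝ)⁻¹)
    rwa [smul_zero, smul_smul, inv_mul_cancel₀ (by norm_num : (2:ℝ) ≠ 0), one_smul] at h3
  constructor
  · intro h ε hε
    obtain ⟨k, hk⟩ := h e he (ε / 2) (by linarith)
    refine ⟨k, fun n hn m hm => ?_⟩
    have hou := hk n hn m hm
    have hy : d (xs n) (xs m) ≤ (ε / 2) • e := by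
      have := hou.1
      rw [sub_pos] at this
      exact this.le
    have hle : pnorm e (d (xs n) (xs m)) ≤ ε / 2 := by
      apply Real.iSup_le _ (by linarith)
      rintro ⟨f, hf⟩
      have hfpos : 0 ≤ f (d (xs n) (xs m)) := hf.1 _ (hdnonneg n m)
      have hfle : f (d (xs n) (xs m)) ≤ ε / 2 := by
        have h0 : 0 ≤ f ((ε / 2) • e - d (xs n) (xs m)) := hf.1 _ (sub_nonneg.2 hy)
        rw [map_sub, map_smul, hf.2, smul_eq_mul, mul_one] at h0
        linarith
      rw [abs_of_nonneg hfpos]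
      exact hfle
    linarith
  · intro h u hu ε hε
    obtain ⟨l, hl, hle⟩ := hu.2 e
    obtain ⟨k, hk⟩ := h (ε / (2 * l)) (by positivity)
    refine ⟨k, fun n hn m hm => ?_⟩
    set y := d (xs n) (xs m) with hy
    have h1 : Nfun e y < ε / (2 * l) := lt_of_le_of_lt (Nfun_le_pnorm he harch y) (hk n hn m hm)
    have h2 : y ≤ (ε / (2 * l)) • e := (Nfun_le_iff he harch).1 h1.le
    have h3 : (ε / (2 * l)) • e ≤ (ε / 2) • u := by
      have := smul_le_smul_of_nonneg_left hle (by positivity : (0:ℝ) ≤ ε / (2 * l))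
      rwa [smul_smul, show ε / (2 * l) * l = ε / 2 by field_simp] at this
    have h4 : y ≤ (ε / 2) • u := h2.trans h3
    have h5 : (ε / 2) • u ≤ ε • u - y := by
      have := sub_le_sub_left h4 (ε • u)
      rwa [show ε • u - (ε / 2) • u = (ε / 2) • u by rw [← sub_smul]; congr 1; ring] at this
    constructor
    · exact lt_of_lt_of_le (smul_pos (by linarith : (0:ℝ) < ε / 2) hu.1) h5
    · intro x
      obtain ⟨c, hc, hcu⟩ := hu.2 x
      refine ⟨2 * c / ε, by positivity, ?_⟩
      have h6 : (2 * c / ε) • ((ε / 2) • u) ≤ (2 * c / ε) • (ε • u - y) :=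
        smul_le_smul_of_nonneg_left h5 (by positivity)
      rw [smul_smul, show 2 * c / ε * (ε / 2) = c by field_simp] at h6
      exact hcu.trans h6
end
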